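/- With B and ψ the relativised collapsing hierarchy: for every ordinal γ, ψ(γ) is a strongly critical ordinal (a fixed point of α ↦ φ α 0) and ψ(γ) ≥ Γ_{θ+1}. -/

import Mathlib

open Ordinal

/-- The binary Veblen function: `veblen 0 β = ω ^ β`, and for `α > 0`,
`veblen α` enumerates the common fixed points of `veblen γ` for `γ < α`. -/
noncomputable def veblen : Ordinal → Ordinal → Ordinal :=
  WellFounded.fix Ordinal.lt_wf
    (fun α ih => if α = 0 then fun β => omega0 ^ β
      else derivFamily (familyOfBFamily (α : Ordinal.{0}) (fun ξ h => ih ξ h)))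

/-- The set of strongly critical ordinals. -/
def StronglyCritical (γ : Ordinal) : Prop := _root_.veblen γ 0 = γ

/-- `Gamma β` is the `β`-th strongly critical ordinal. -/
noncomputable def Gamma : Ordinal → Ordinal :=
  enumOrd {γ | StronglyCritical γ}

/-- The least uncountable cardinal (as an ordinal) greater than `θ`. -/
noncomputable def OmegaB (θ : Ordinal) : Ordinal :=
  sInf {o | θ < o ∧ o.card.ord = o ∧ Cardinal.aleph0 < o.card}

/-- Closure of `{0, Ω} ∪ {Γ_β : β ≤ θ}` under `+`, `veblen` and the
given partial collapsing function `f` on arguments below `α`. -/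
def closB (θ α : Ordinal) (f : ∀ ξ, ξ < α → Ordinal) : Set Ordinal :=
  ⋂₀ {S : Set Ordinal |
      0 ∈ S ∧ OmegaB θ ∈ S ∧ (∀ β ≤ θ, Gamma β ∈ S) ∧
      (∀ x ∈ S, ∀ y ∈ S, x + y ∈ S) ∧
      (∀ x ∈ S, ∀ y ∈ S, _root_.veblen x y ∈ S) ∧
      (∀ ξ (h : ξ < α), ξ ∈ S → f ξ h ∈ S)}

/-- The relativised collapsing function `ψ_θ`. -/
noncomputable def psiB (θ : Ordinal) : Ordinal → Ordinal :=
  WellFounded.fix Ordinal.lt_wf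
    (fun α ih => sInf {β | β ∉ closB θ α (fun ξ h => ih ξ h)})

/-- The relativised collapsing hierarchy `B_θ(α)`. -/
def BB (θ α : Ordinal) : Set Ordinal :=
  closB θ α (fun ξ _ => psiB θ ξ)

/-- The least strongly critical ordinal strictly above `δ`. -/
noncomputable def gammaSucc (δ : Ordinal) : Ordinal :=
  sInf {γ | δ < γ ∧ StronglyCritical γ}

/-!
The Veblen function of the statement is Mathlib's `Ordinal.veblen` and `Gamma` is
`Ordinal.gamma`. Every nonzero ordinal that is neither a sum nor a Veblen value of smaller
ordinals is strongly critical: it is additively principal, hence `ω ^ c = φ a b` with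
`b < ω ^ c` and `a ≤ c`, and `a` cannot be smaller than `ω ^ c`.

All ordinals below `Γ_{θ+1}` are generated from `0` and `Γ_β` (`β ≤ θ`) by `+` and `φ`, so they
lie in every `B(α)`. Conversely `Γ_{succ (Ω + θ + α)}` is closed under `+` and `φ` and exceeds
`Ω`, the `Γ_β` with `β ≤ θ` and (inductively) every `ψ ξ` with `ξ < α`, so it bounds `B(α)`.
Hence `ψ α` exists, is at least `Γ_{θ+1}`, and, since `B(α)` is closed under `+` and `φ` and
contains everything below `ψ α`, it is neither a sum nor a Veblen value of smaller ordinals.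
-/

open Set

local notation "φ" => Ordinal.veblen

theorem veblen_eq_ordinal_veblen : _root_.veblen = φ := by
  funext α
  induction α using WellFoundedLT.induction with
  | _ α ih =>
  rw [_root_.veblen, WellFounded.fix_eq]
  split_ifs with hα
  · rw [hα, Ordinal.veblen_zero]
  · -- `familyOfBFamily α g i` unfolds to `g (typein (· < ·) i) _`
    change derivFamily (fun i : α.ToType => _root_.veblen (typein (α := α.ToType) (· < ·) i)) = _
    have hfam : (fun i : α.ToType => _root_.veblen (typein (α := α.ToType) (· < ·) i)) =
        fun i => φ (typein (α := α.ToType) (· < ·) i) := funext fun i => ih _ (typein_lt_self i)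
    -- both sides enumerate the common fixed points of the `φ ξ` with `ξ < α`
    rw [hfam, Ordinal.veblen_of_ne_zero hα, derivFamily_eq_enumOrd fun _ => isNormal_veblen _,
      derivFamily_eq_enumOrd fun _ => isNormal_veblen _]
    congr 1
    ext x
    simp only [mem_iInter, Function.mem_fixedPoints, Function.IsFixedPt, Subtype.forall, mem_Iio]
    refine ⟨fun h ξ hξ => ?_, fun h i => h _ (typein_lt_self i)⟩
    obtain ⟨i, rfl⟩ := typein_surj (α := α.ToType) (· < ·) (hξ.trans_eq (type_toType α).symm)
    exact h i

theorem stronglyCritical_iff {γ : Ordinal} : StronglyCritical γ ↔ φ γ 0 = γ := by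
  rw [StronglyCritical, veblen_eq_ordinal_veblen]

theorem Gamma_eq_gamma : Gamma = Γ_ := by
  rw [Gamma, gamma, deriv_eq_enumOrd isNormal_veblen_zero]
  congr 1
  ext γ
  exact stronglyCritical_iff

namespace Ordinal

theorem isPrincipal_add_gamma (o : Ordinal) : IsPrincipal (· + ·) (Γ_ o) := by
  obtain ⟨c, hc⟩ := veblen_mem_range_opow (Γ_ o) 0
  rw [← veblen_gamma_zero, ← hc]
  exact isPrincipal_add_omega0_opow c

theorem isPrincipal_veblen_gamma (o : Ordinal) : IsPrincipal φ (Γ_ o) := fun a b ha hb =>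
  calc φ a b < φ a (Γ_ o) := veblen_right_strictMono a hb
    _ = Γ_ o := by simpa only [veblen_gamma_zero] using veblen_veblen_of_lt ha 0

theorem mem_range_gamma_of_forall_ne {β : Ordinal} (h0 : β ≠ 0)
    (hadd : ∀ a < β, ∀ b < β, a + b ≠ β) (hveb : ∀ a < β, ∀ b < β, φ a b ≠ β) :
    β ∈ range Γ_ := by
  obtain ⟨c, rfl⟩ := (isPrincipal_add_iff_zero_or_omega0_opow.1
    (isPrincipal_add_iff_add_lt_ne_self.2 hadd)).resolve_left h0
  have hc := veblen_invVeblen₁_invVeblen₂ c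
  have h₁ : invVeblen₁ c = ω ^ c :=
    le_antisymm ((invVeblen₁_le c).trans (right_le_opow c one_lt_omega0))
      (not_lt.1 fun h => hveb _ h _ (invVeblen₂_lt c) hc)
  rw [mem_range_gamma]
  refine le_antisymm ?_ (left_le_veblen _ _)
  calc φ (ω ^ c) 0 ≤ φ (ω ^ c) (invVeblen₂ c) := veblen_le_veblen_iff_right.2 zero_le
    _ = ω ^ c := h₁ ▸ hc

end Ordinal

section closB

variable {θ α : Ordinal} {f : ∀ ξ, ξ < α → Ordinal}

theorem zero_mem_closB : (0 : Ordinal) ∈ closB θ α f :=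
  mem_sInter.2 fun _ hS => hS.1

theorem gamma_mem_closB {β : Ordinal} (hβ : β ≤ θ) : Γ_ β ∈ closB θ α f :=
  mem_sInter.2 fun _ hS => Gamma_eq_gamma ▸ hS.2.2.1 β hβ

theorem add_mem_closB {x y : Ordinal} (hx : x ∈ closB θ α f) (hy : y ∈ closB θ α f) :
    x + y ∈ closB θ α f :=
  mem_sInter.2 fun S hS => hS.2.2.2.1 x (hx S hS) y (hy S hS)

theorem veblen_mem_closB {x y : Ordinal} (hx : x ∈ closB θ α f) (hy : y ∈ closB θ α f) :
    φ x y ∈ closB θ α f :=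
  mem_sInter.2 fun S hS => veblen_eq_ordinal_veblen ▸ hS.2.2.2.2.1 x (hx S hS) y (hy S hS)

theorem mem_closB_of_lt_gamma {β : Ordinal} (hβ : β < Γ_ (θ + 1)) : β ∈ closB θ α f := by
  induction β using WellFoundedLT.induction with
  | _ β ih =>
  have ih' : ∀ b < β, b ∈ closB θ α f := fun b hb => ih b hb (hb.trans hβ)
  by_cases h0 : β = 0
  · exact h0 ▸ zero_mem_closB
  by_cases hadd : ∃ a < β, ∃ b < β, a + b = β
  · obtain ⟨a, ha, b, hb, rfl⟩ := hadd
    exact add_mem_closB (ih' a ha) (ih' b hb)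
  by_cases hveb : ∃ a < β, ∃ b < β, φ a b = β
  · obtain ⟨a, ha, b, hb, rfl⟩ := hveb
    exact veblen_mem_closB (ih' a ha) (ih' b hb)
  push Not at hadd hveb
  obtain ⟨η, rfl⟩ := mem_range_gamma_of_forall_ne h0 hadd hveb
  exact gamma_mem_closB (Order.lt_add_one_iff.1 (gamma_lt_gamma.1 hβ))

theorem closB_subset_Iio_gamma {ι : Ordinal} (hΩ : OmegaB θ < Γ_ ι) (hθ : θ < ι)
    (hf : ∀ ξ (h : ξ < α), f ξ h < Γ_ ι) : closB θ α f ⊆ Iio (Γ_ ι) := by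
  refine sInter_subset_of_mem ⟨gamma_pos, hΩ, fun β hβ => ?_, fun x hx y hy =>
    isPrincipal_add_gamma ι hx hy, fun x hx y hy => ?_, fun ξ h _ => hf ξ h⟩
  · rw [Gamma_eq_gamma]
    exact gamma_lt_gamma.2 (hβ.trans_lt hθ)
  · rw [veblen_eq_ordinal_veblen]
    exact isPrincipal_veblen_gamma ι hx hy

end closB

section psiB

variable {θ α : Ordinal}

theorem psiB_eq_sInf (θ α : Ordinal) : psiB θ α = sInf {β | β ∉ BB θ α} :=
  WellFounded.fix_eq _ _ _

theorem mem_BB_of_lt_psiB {β : Ordinal} (hβ : β < psiB θ α) : β ∈ BB θ α := by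
  rw [psiB_eq_sInf] at hβ
  simpa using notMem_of_lt_csInf' hβ

theorem psiB_notMem_BB {β : Ordinal} (hβ : β ∉ BB θ α) : psiB θ α ∉ BB θ α := by
  rw [psiB_eq_sInf]
  exact csInf_mem (s := {β | β ∉ BB θ α}) ⟨β, hβ⟩

theorem psiB_le_of_notMem_BB {β : Ordinal} (hβ : β ∉ BB θ α) : psiB θ α ≤ β := by
  rw [psiB_eq_sInf]
  exact csInf_le' hβ

theorem gamma_notMem_BB (θ α : Ordinal) : Γ_ (Order.succ (OmegaB θ + θ + α)) ∉ BB θ α := by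
  induction α using WellFoundedLT.induction with
  | _ α ih =>
  refine fun hmem => lt_irrefl _ (mem_Iio.1 (closB_subset_Iio_gamma ?_ ?_ (fun ξ hξ => ?_) hmem))
  · exact (Order.lt_succ_of_le (le_self_add.trans le_self_add)).trans_le strictMono_gamma.le_apply
  · exact Order.lt_succ_of_le (le_add_self.trans le_self_add)
  · exact (psiB_le_of_notMem_BB (ih ξ hξ)).trans_lt
      (gamma_lt_gamma.2 (Order.succ_lt_succ (add_lt_add_right hξ _)))

end psiB

theorem stmt10 (θ γ : Ordinal) :
    StronglyCritical (psiB θ γ) ∧ Gamma (θ + 1) ≤ psiB θ γ := by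
  have hψ : psiB θ γ ∉ BB θ γ := psiB_notMem_BB (gamma_notMem_BB θ γ)
  have hlt : ∀ β < psiB θ γ, β ∈ BB θ γ := fun _ => mem_BB_of_lt_psiB
  refine ⟨?_, ?_⟩
  · rw [stronglyCritical_iff, ← mem_range_gamma]
    refine mem_range_gamma_of_forall_ne (fun h => hψ (h ▸ zero_mem_closB)) ?_ ?_
    · exact fun a ha b hb h => hψ (h ▸ add_mem_closB (hlt a ha) (hlt b hb))
    · exact fun a ha b hb h => hψ (h ▸ veblen_mem_closB (hlt a ha) (hlt b hb))
  · rw [Gamma_eq_gamma]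
    exact not_lt.1 fun h => hψ (mem_closB_of_lt_gamma h)
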